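/- For the makespan computed via the earliestTime recursion, the makespan of any crane-to-bay assignment is at least ⌈(∑_{i=0}^{n-1} p_i) / m⌉, where m is the number of cranes. -/

import Mathlib

/-!
In the recursion crane `k` waits for crane `k + 1`, so crane `0` finishes no earlier than
any crane `j` has finished its own load, the sum of the processing times of the bays
assigned to `j`. Since every bay goes to one of the `m` cranes, these `m` loads add up to
the total processing time, and the makespan is at least their average.
-/

/-- One column of the earliestTime recursion: given the previous column `prev`,
the crane `σb` assigned to the current bay and its processing time `pb`,
compute the value for crane `k` (cranes are processed from `m-1` down to `0`,
and crane `k` waits for crane `k+1`). -/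
def etColStep (m σb pb : ℕ) (prev : ℕ → ℕ) (k : ℕ) : ℕ :=
  if _h : k + 1 < m then
    max (prev k + (if σb = k then pb else 0)) (etColStep m σb pb prev (k + 1))
  else
    prev k + (if σb = k then pb else 0)
termination_by m - k
decreasing_by omega

/-- The column of earliestTime values for bay `b` (Algorithm 1). -/
def etCol (m : ℕ) (σ p : ℕ → ℕ) : ℕ → ℕ → ℕ
  | 0 => etColStep m (σ 0) (p 0) (fun _ => 0)
  | b + 1 => etColStep m (σ (b + 1)) (p (b + 1)) (etCol m σ p b)

/-- `earliestTime m σ p k b` : the earliest time crane `k` can move past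
bay `b`, as computed by the dynamic programming recursion of Algorithm 1. -/
def earliestTime (m : ℕ) (σ p : ℕ → ℕ) (k b : ℕ) : ℕ :=
  etCol m σ p b k

def craneLoad (σ p : ℕ → ℕ) (j n : ℕ) : ℕ :=
  ∑ i ∈ Finset.range n with σ i = j, p i

theorem le_etColStep {m σb pb : ℕ} {prev : ℕ → ℕ} {k j : ℕ} (hkj : k ≤ j) (hj : j < m) :
    prev j + (if σb = j then pb else 0) ≤ etColStep m σb pb prev k := by
  by_cases hk : k + 1 < m
  · rw [etColStep, dif_pos hk]
    rcases hkj.eq_or_lt with rfl | hlt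
    · exact le_max_left _ _
    · exact (le_etColStep hlt hj).trans (le_max_right _ _)
  · obtain rfl : k = j := by omega
    rw [etColStep, dif_neg hk]
termination_by m - k

theorem craneLoad_succ_le_etCol {m : ℕ} {σ p : ℕ → ℕ} {k j : ℕ} (hkj : k ≤ j) (hj : j < m)
    (b : ℕ) : craneLoad σ p j (b + 1) ≤ etCol m σ p b k := by
  induction b generalizing k with
  | zero =>
    simpa only [craneLoad, etCol, Finset.sum_filter, Finset.sum_range_one, zero_add] using
      le_etColStep (prev := fun _ => 0) hkj hj
  | succ b ih =>
    calc craneLoad σ p j (b + 2)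
        = craneLoad σ p j (b + 1) + (if σ (b + 1) = j then p (b + 1) else 0) := by
          simp only [craneLoad, Finset.sum_filter, Finset.sum_range_succ]
      _ ≤ etCol m σ p b j + (if σ (b + 1) = j then p (b + 1) else 0) := by
          gcongr; exact ih le_rfl
      _ ≤ etCol m σ p (b + 1) k := le_etColStep hkj hj

theorem craneLoad_le_earliestTime {m : ℕ} {σ p : ℕ → ℕ} {j : ℕ} (hj : j < m) (n : ℕ) :
    craneLoad σ p j n ≤ earliestTime m σ p 0 (n - 1) :=
  calc craneLoad σ p j n
      ≤ craneLoad σ p j (n - 1 + 1) :=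
        Finset.sum_le_sum_of_subset (Finset.filter_subset_filter _
          (Finset.range_subset_range.mpr (by omega)))
    _ ≤ earliestTime m σ p 0 (n - 1) := craneLoad_succ_le_etCol (Nat.zero_le j) hj _

theorem sum_eq_sum_craneLoad {m n : ℕ} {σ : ℕ → ℕ} (p : ℕ → ℕ) (hσ : ∀ i, σ i < m) :
    ∑ i ∈ Finset.range n, p i = ∑ j ∈ Finset.range m, craneLoad σ p j n :=
  (Finset.sum_fiberwise_of_maps_to (fun i _ => Finset.mem_range.mpr (hσ i)) p).symm

theorem sum_le_mul_makespan {m n : ℕ} {σ : ℕ → ℕ} (p : ℕ → ℕ) (hσ : ∀ i, σ i < m) :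
    ∑ i ∈ Finset.range n, p i ≤ m * earliestTime m σ p 0 (n - 1) := by
  rw [sum_eq_sum_craneLoad p hσ]
  calc ∑ j ∈ Finset.range m, craneLoad σ p j n
      ≤ ∑ _j ∈ Finset.range m, earliestTime m σ p 0 (n - 1) :=
        Finset.sum_le_sum fun j hj => craneLoad_le_earliestTime (Finset.mem_range.mp hj) n
    _ = m * earliestTime m σ p 0 (n - 1) := by simp

theorem makespan_ge_average_load_general (m n : ℕ) (σ p : ℕ → ℕ)
    (hσ : ∀ i, σ i < m) :
    ⌈(∑ i ∈ Finset.range n, (p i : ℚ)) / (m : ℚ)⌉ ≤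
      (earliestTime m σ p 0 (n - 1) : ℤ) := by
  rw [Int.ceil_le]
  refine div_le_of_le_mul₀ (Nat.cast_nonneg m) (Nat.cast_nonneg _) ?_
  exact_mod_cast (sum_le_mul_makespan p hσ).trans_eq (mul_comm _ _)

/-- The makespan of any crane-to-bay assignment is at least the average load
`⌈(∑ p_i) / m⌉`. -/
theorem makespan_ge_average_load (m n : ℕ) (σ p : ℕ → ℕ)
    (hm : 1 ≤ m) (hn : 1 ≤ n) (hσ : ∀ i, σ i < m) :
    ⌈(∑ i ∈ Finset.range n, (p i : ℚ)) / (m : ℚ)⌉ ≤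
      (earliestTime m σ p 0 (n - 1) : ℤ) :=
  makespan_ge_average_load_general m n σ p hσ
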